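/- For each $\mathbf{n} \in \mathbf{D}$, the $X$-valued function $f(\mathbf{n}) = \sum_{k=0}^{\infty} \sum_{\sigma \in \{0,1\}^k} \frac{1}{(k+1)2^{k/2}} \frac{1}{\lambda(A(\sigma,\mathbf{n}(k)))} e(\sigma,\mathbf{n}(k)) \chi_{A(\sigma,\mathbf{n}(k))}$ is Pettis integrable, and for every $\tau \in \{0,1\}^{n_k}$: $\frac{1}{2K} 2^{-n_k/2} u_k \le \|\int_{I_\tau} f(\mathbf{n})_{|\tau}\| \le \frac{3}{2} 2^{-n_k/2} u_k$, where $u_k = \sqrt{\sum_{i=n_k}^{n_{k+1}-1} \frac{1}{(i+1)^2}}$. -/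

import Mathlib

open MeasureTheory
open scoped Classical

noncomputable section

/-- The index set `B = {(σ,i) : σ ∈ {0,1}^{<∞}, 0 ≤ i ≤ |σ|}`. -/
def Bidx : Type := Σ σ : List Bool, Fin (σ.length + 1)

/-- Left endpoint of the dyadic interval `I_σ`. -/
noncomputable def dyadicLeft (σ : List Bool) : ℝ :=
  ∑ i ∈ Finset.range σ.length, if σ.getD i false then (2:ℝ)⁻¹ ^ (i+1) else 0

/-- The dyadic interval `I_σ ⊆ [0,1]` of length `2^{-|σ|}`: `I_∅ = [0,1]`,
`I_{σ0}` is the left half and `I_{σ1}` the right half of `I_σ`. -/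
noncomputable def dyadicInterval (σ : List Bool) : Set ℝ :=
  Set.Icc (dyadicLeft σ) (dyadicLeft σ + (2:ℝ)⁻¹ ^ σ.length)

/-- `f` is Pettis integrable with respect to `μ`: every continuous functional composed with
`f` is integrable, and over each measurable set there is a vector representing the integrals. -/
def PettisIntegrable {X : Type} [NormedAddCommGroup X] [NormedSpace ℝ X]
    (f : ℝ → X) (μ : MeasureTheory.Measure ℝ) : Prop :=
  (∀ φ : X →L[ℝ] ℝ, MeasureTheory.Integrable (fun t => φ (f t)) μ) ∧
  ∀ E : Set ℝ, MeasurableSet E → ∃ v : X, ∀ φ : X →L[ℝ] ℝ, φ v = ∫ t in E, φ (f t) ∂μ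

/-- `v` is the Pettis integral of `f` over the set `E` (w.r.t. `μ`). -/
def IsPettisIntegralOn {X : Type} [NormedAddCommGroup X] [NormedSpace ℝ X]
    (f : ℝ → X) (μ : MeasureTheory.Measure ℝ) (E : Set ℝ) (v : X) : Prop :=
  ∀ φ : X →L[ℝ] ℝ, φ v = ∫ t in E, φ (f t) ∂μ

/-- The basic function `f = ∑_{(σ,i) ∈ B} c(σ,i) (1/λ(A(σ,i))) e(σ,i) χ_{A(σ,i)}`. -/
noncomputable def basicFun {X : Type} [NormedAddCommGroup X] [NormedSpace ℝ X]
    (c : Bidx → ℝ) (A : Bidx → Set ℝ) (e : Bidx → X) : ℝ → X :=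
  fun t => ∑' p : Bidx,
    Set.indicator (A p) (fun _ => ((MeasureTheory.volume (A p)).toReal)⁻¹ • (c p • e p)) t

/-- The restriction `f_{|τ}`: the subseries of the basic function over indices `(σ,i)`
with `σ` an extension of `τ`. -/
noncomputable def basicFunRes {X : Type} [NormedAddCommGroup X] [NormedSpace ℝ X]
    (τ : List Bool) (c : Bidx → ℝ) (A : Bidx → Set ℝ) (e : Bidx → X) : ℝ → X :=
  basicFun (fun p => if τ <+: p.1 then c p else 0) A e

/-- Coefficients of the special basic function `f(𝐧)`: the coefficient of `(σ, i)` is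
`1/((k+1)2^{k/2})` when `|σ| = k` and `i = 𝐧(k)`, and `0` otherwise. -/
noncomputable def specialCoef (n : ℕ → ℕ) : Bidx → ℝ := fun p =>
  if (p.2 : ℕ) = n p.1.length then
    (((p.1.length : ℝ) + 1) * (2:ℝ) ^ ((p.1.length : ℝ) / 2))⁻¹
  else 0

/-!
For a functional `φ`, `φ ∘ f` is a series of multiples of the indicators of the disjoint sets
`A p`, so it is integrable with `∫_E φ ∘ f = ∑ θ_p c_p φ(e_p)`, where
`θ_p = λ(A p ∩ E) / λ(A p) ∈ [0, 1]`; the Pettis integral over `E` is therefore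
`∑ θ_p c_p e_p`, as soon as such series converge in `X`.

Restricted to the subtree below `τ`, level `l` carries `2^(l - |τ|)` coefficients of size
`1 / ((l + 1) 2^(l/2))`, so the coefficients of the block of levels `[n_j, n_(j+1))` have
`ℓ²`-norm at most `2^(-|τ|/2) u_j`, and by the upper Dvoretzky estimate so does the block sum.
As `u_(j+1) < u_j / 3`, the blocks from the `k`-th on add up to at most
`(3/2) 2^(-|τ|/2) u_k`: this gives convergence and the upper bound. For `|τ| = n_k` every `A p`
below `τ` lies in `I_τ`, so `∫_{I_τ} f_{|τ} = ∑ c_p e_p` exactly; its `k`-th block is full,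
hence of norm at least `(1/2) 2^(-n_k/2) u_k` by the lower estimate, and the basis constant `K`
of the block decomposition gives the lower bound.
-/

instance : Countable Bidx := inferInstanceAs (Countable (Σ σ : List Bool, Fin (σ.length + 1)))

lemma dyadicLeft_append_singleton (σ : List Bool) (b : Bool) :
    dyadicLeft (σ ++ [b]) = dyadicLeft σ + if b then (2:ℝ)⁻¹ ^ (σ.length + 1) else 0 := by
  unfold dyadicLeft
  rw [List.length_append, List.length_singleton, Finset.sum_range_succ,
    List.getD_append_right _ _ _ _ le_rfl, Nat.sub_self]
  congr 1
  refine Finset.sum_congr rfl fun i hi => ?_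
  rw [List.getD_append _ _ _ _ (Finset.mem_range.mp hi)]

lemma dyadicInterval_append_singleton_subset (σ : List Bool) (b : Bool) :
    dyadicInterval (σ ++ [b]) ⊆ dyadicInterval σ := by
  unfold dyadicInterval
  rw [dyadicLeft_append_singleton, List.length_append, List.length_singleton, pow_succ]
  have h : (0:ℝ) < (2:ℝ)⁻¹ ^ σ.length := by positivity
  apply Set.Icc_subset_Icc <;> cases b <;> simp <;> linarith

lemma dyadicInterval_anti {τ σ : List Bool} (h : τ <+: σ) :
    dyadicInterval σ ⊆ dyadicInterval τ := by
  obtain ⟨t, rfl⟩ := h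
  induction t using List.reverseRecOn with
  | nil => rw [List.append_nil]
  | append_singleton t b ih =>
    rw [← List.append_assoc]
    exact (dyadicInterval_append_singleton_subset _ b).trans ih

lemma dyadicInterval_subset_Icc (σ : List Bool) : dyadicInterval σ ⊆ Set.Icc 0 1 := by
  simpa [dyadicInterval, dyadicLeft] using dyadicInterval_anti (List.nil_prefix (l := σ))

section Blocks

variable {n : ℕ → ℕ}

lemma le_of_apply_le_of_lt_apply_succ (hn : StrictMono n) {i j x : ℕ} (hi : n i ≤ x)
    (hj : x < n (j + 1)) : i ≤ j :=
  Nat.lt_succ_iff.1 (hn.lt_iff_lt.1 (hi.trans_lt hj))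

def listsOfLength (l : ℕ) : Finset (List Bool) :=
  (Finset.univ : Finset (List.Vector Bool l)).map ⟨List.Vector.toList, List.Vector.toList_injective⟩

lemma mem_listsOfLength {l : ℕ} {σ : List Bool} : σ ∈ listsOfLength l ↔ σ.length = l :=
  ⟨fun h => by obtain ⟨v, -, rfl⟩ := Finset.mem_map.1 h; exact v.toList_length,
    fun h => Finset.mem_map.2 ⟨⟨σ, h⟩, Finset.mem_univ _, rfl⟩⟩

lemma card_listsOfLength (l : ℕ) : (listsOfLength l).card = 2 ^ l := by
  rw [listsOfLength, Finset.card_map, Finset.card_univ, card_vector, Fintype.card_bool]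

lemma card_filter_prefix_listsOfLength {τ : List Bool} {l : ℕ} (h : τ.length ≤ l) :
    ((listsOfLength l).filter (τ <+: ·)).card = 2 ^ (l - τ.length) := by
  have : (listsOfLength l).filter (τ <+: ·) =
      (listsOfLength (l - τ.length)).map ⟨(τ ++ ·), List.append_right_injective τ⟩ := by
    ext σ
    simp only [Finset.mem_filter, mem_listsOfLength, Finset.mem_map, Function.Embedding.coeFn_mk]
    constructor
    · rintro ⟨rfl, t, rfl⟩
      exact ⟨t, by simp, rfl⟩
    · rintro ⟨t, ht, rfl⟩
      exact ⟨by simp [ht]; omega, List.prefix_append τ t⟩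
  rw [this, Finset.card_map, card_listsOfLength]

def levelIndices (l : ℕ) : Finset Bidx := (listsOfLength l).sigma fun _ => Finset.univ

lemma mem_levelIndices {l : ℕ} {p : Bidx} : p ∈ levelIndices l ↔ p.1.length = l := by
  exact Finset.mem_sigma.trans (by simp [mem_listsOfLength])

def blockIndices (n : ℕ → ℕ) (j : ℕ) : Finset Bidx :=
  (Finset.Ico (n j) (n (j + 1))).biUnion levelIndices

lemma mem_blockIndices {j : ℕ} {p : Bidx} :
    p ∈ blockIndices n j ↔ n j ≤ p.1.length ∧ p.1.length < n (j + 1) := by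
  simp [blockIndices, mem_levelIndices]

lemma sum_blockIndices {M : Type*} [AddCommMonoid M] (f : Bidx → M) (j : ℕ) :
    ∑ p ∈ blockIndices n j, f p =
      ∑ l ∈ Finset.Ico (n j) (n (j + 1)), ∑ p ∈ levelIndices l, f p := by
  refine Finset.sum_biUnion fun a _ b _ hab => Finset.disjoint_left.2 fun p hpa hpb => hab ?_
  rw [← mem_levelIndices.1 hpa, ← mem_levelIndices.1 hpb]

lemma disjoint_blockIndices (hn : StrictMono n) {i j : ℕ} (hij : i ≠ j) :
    Disjoint (blockIndices n i) (blockIndices n j) := by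
  refine Finset.disjoint_left.2 fun p hpi hpj => hij ?_
  rw [mem_blockIndices] at hpi hpj
  exact le_antisymm (le_of_apply_le_of_lt_apply_succ hn hpi.1 hpj.2)
    (le_of_apply_le_of_lt_apply_succ hn hpj.1 hpi.2)

end Blocks

section Coefficients

variable {nn : ℕ → ℕ}

def levelWeight (k : ℕ) : ℝ := (((k : ℝ) + 1) * (2:ℝ) ^ ((k : ℝ) / 2))⁻¹

lemma rpow_neg_half_sq (L : ℕ) : ((2:ℝ) ^ (-(L : ℝ) / 2)) ^ 2 = (2 ^ L)⁻¹ := by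
  rw [← Real.rpow_mul_natCast zero_le_two, ← Real.rpow_natCast, ← Real.rpow_neg zero_le_two]
  norm_num

lemma levelWeight_sq (k : ℕ) : levelWeight k ^ 2 = (2 ^ k)⁻¹ * (((k : ℝ) + 1)⁻¹) ^ 2 := by
  have h : ((2:ℝ) ^ ((k : ℝ) / 2)) ^ 2 = 2 ^ k := by
    rw [← Real.rpow_mul_natCast zero_le_two, ← Real.rpow_natCast]
    norm_num
  rw [levelWeight, inv_pow, mul_pow, h, mul_inv, mul_comm, inv_pow]

def resCoef (τ : List Bool) (c : Bidx → ℝ) : Bidx → ℝ := fun p => if τ <+: p.1 then c p else 0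

lemma resCoef_nil (c : Bidx → ℝ) : resCoef [] c = c := funext fun _ => if_pos List.nil_prefix

lemma prefix_of_resCoef_ne_zero {τ : List Bool} {c : Bidx → ℝ} {p : Bidx} (h : resCoef τ c p ≠ 0) :
    τ <+: p.1 :=
  of_not_not fun h' => h (if_neg h')

lemma sum_fin_sq_resCoef_specialCoef (hnn : ∀ i, nn i ≤ i) (τ σ : List Bool) :
    ∑ i : Fin (σ.length + 1), resCoef τ (specialCoef nn) ⟨σ, i⟩ ^ 2 =
      if τ <+: σ then levelWeight σ.length ^ 2 else 0 := by
  have hi : nn σ.length < σ.length + 1 := Nat.lt_succ_of_le (hnn _)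
  by_cases h : τ <+: σ
  · simp only [resCoef, specialCoef, if_pos h, ite_pow, ← Fin.ext_iff (b := ⟨_, hi⟩)]
    simp [levelWeight]
  · simp [resCoef, h]

lemma sum_levelIndices_sq_resCoef_specialCoef (hnn : ∀ i, nn i ≤ i) (τ : List Bool) (l : ℕ) :
    ∑ p ∈ levelIndices l, resCoef τ (specialCoef nn) p ^ 2 =
      if τ.length ≤ l then (2 ^ τ.length)⁻¹ * (((l : ℝ) + 1)⁻¹) ^ 2 else 0 := by
  refine (Finset.sum_sigma (listsOfLength l) (fun _ => Finset.univ)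
    fun p => resCoef τ (specialCoef nn) p ^ 2).trans ?_
  simp only [sum_fin_sq_resCoef_specialCoef hnn]
  rw [← Finset.sum_filter, Finset.sum_congr rfl fun σ hσ => by
    rw [mem_listsOfLength.1 (Finset.mem_filter.1 hσ).1], Finset.sum_const, nsmul_eq_mul]
  split_ifs with h
  · have h2 : (2:ℝ) ^ l = 2 ^ (l - τ.length) * 2 ^ τ.length := by
      rw [← pow_add, Nat.sub_add_cancel h]
    rw [card_filter_prefix_listsOfLength h, levelWeight_sq, h2]
    push_cast
    field_simp
  · rw [Finset.filter_false_of_mem fun σ hσ hτ =>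
        h (hτ.length_le.trans_eq (mem_listsOfLength.1 hσ)),
      Finset.card_empty, Nat.cast_zero, zero_mul]

def harmonicBlockNorm (n : ℕ → ℕ) (j : ℕ) : ℝ :=
  √(∑ i ∈ Finset.Ico (n j) (n (j + 1)), (((i : ℝ) + 1)⁻¹) ^ 2)

lemma harmonicBlockNorm_nonneg (n : ℕ → ℕ) (j : ℕ) : 0 ≤ harmonicBlockNorm n j :=
  Real.sqrt_nonneg _

lemma rpow_neg_half_mul_harmonicBlockNorm_sq (L : ℕ) (n : ℕ → ℕ) (j : ℕ) :
    ((2:ℝ) ^ (-(L : ℝ) / 2) * harmonicBlockNorm n j) ^ 2 =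
      ∑ i ∈ Finset.Ico (n j) (n (j + 1)), (2 ^ L)⁻¹ * (((i : ℝ) + 1)⁻¹) ^ 2 := by
  rw [mul_pow, rpow_neg_half_sq, harmonicBlockNorm, Real.sq_sqrt (by positivity), Finset.mul_sum]

lemma sum_blockIndices_sq_resCoef_specialCoef_le (hnn : ∀ i, nn i ≤ i) (τ : List Bool)
    (n : ℕ → ℕ) (j : ℕ) :
    ∑ p ∈ blockIndices n j, resCoef τ (specialCoef nn) p ^ 2 ≤
      ((2:ℝ) ^ (-(τ.length : ℝ) / 2) * harmonicBlockNorm n j) ^ 2 := by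
  rw [sum_blockIndices, rpow_neg_half_mul_harmonicBlockNorm_sq]
  refine Finset.sum_le_sum fun l _ => ?_
  rw [sum_levelIndices_sq_resCoef_specialCoef hnn]
  split_ifs
  · exact le_rfl
  · positivity

lemma sum_blockIndices_sq_resCoef_specialCoef {n : ℕ → ℕ} (hnn : ∀ i, nn i ≤ i) {τ : List Bool}
    {j : ℕ} (h : τ.length ≤ n j) :
    ∑ p ∈ blockIndices n j, resCoef τ (specialCoef nn) p ^ 2 =
      ((2:ℝ) ^ (-(τ.length : ℝ) / 2) * harmonicBlockNorm n j) ^ 2 := by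
  rw [sum_blockIndices, rpow_neg_half_mul_harmonicBlockNorm_sq]
  refine Finset.sum_congr rfl fun l hl => ?_
  rw [sum_levelIndices_sq_resCoef_specialCoef hnn, if_pos (h.trans (Finset.mem_Ico.1 hl).1)]

end Coefficients

section BlockSeries

variable {X : Type*} [NormedAddCommGroup X] [NormedSpace ℝ X] {n : ℕ → ℕ} {e : Bidx → X}

def blockOf (n : ℕ → ℕ) (x : ℕ) : ℕ := Nat.findGreatest (fun j => n j ≤ x) x

lemma blockOf_spec (hn : StrictMono n) (hn0 : n 0 = 0) (x : ℕ) :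
    n (blockOf n x) ≤ x ∧ x < n (blockOf n x + 1) := by
  refine ⟨Nat.findGreatest_spec (P := fun j => n j ≤ x) (Nat.zero_le x)
    (hn0.le.trans (Nat.zero_le x)), not_le.1 fun h => ?_⟩
  have := Nat.le_findGreatest (P := fun j => n j ≤ x) ((hn.id_le _).trans h) h
  exact Nat.not_succ_le_self _ this

lemma mem_blockIndices_blockOf (hn : StrictMono n) (hn0 : n 0 = 0) (p : Bidx) :
    p ∈ blockIndices n (blockOf n p.1.length) :=
  mem_blockIndices.2 (blockOf_spec hn hn0 _)

lemma sum_range_add_le_of_le_div_three {w : ℕ → ℝ} (hw : ∀ j, w (j + 1) ≤ w j / 3)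
    (hw0 : ∀ j, 0 ≤ w j) (d M : ℕ) : ∑ i ∈ Finset.range d, w (M + i) ≤ 3 / 2 * w M := by
  induction d generalizing M with
  | zero => simpa using hw0 M
  | succ d ih =>
    rw [Finset.sum_range_succ', add_zero,
      Finset.sum_congr rfl fun i _ => by rw [← add_assoc, add_right_comm]]
    linarith [ih (M + 1), hw M]

def BlockUpperBound (n : ℕ → ℕ) (e : Bidx → X) : Prop :=
  ∀ (j : ℕ) (s : Finset Bidx), (∀ p ∈ s, n j ≤ p.1.length ∧ p.1.length < n (j + 1)) →
    ∀ lam : Bidx → ℝ, ‖∑ p ∈ s, lam p • e p‖ ≤ √(∑ p ∈ s, lam p ^ 2)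

variable {lam : Bidx → ℝ} {w : ℕ → ℝ}

lemma norm_sum_smul_le (hn : StrictMono n) (hn0 : n 0 = 0) (he : BlockUpperBound n e)
    (hw : ∀ j, w (j + 1) ≤ w j / 3) (hlam : ∀ j, √(∑ p ∈ blockIndices n j, lam p ^ 2) ≤ w j)
    {M : ℕ} {s : Finset Bidx} (hs : ∀ p ∈ s, lam p ≠ 0 → n M ≤ p.1.length) :
    ‖∑ p ∈ s, lam p • e p‖ ≤ 3 / 2 * w M := by
  set s' := s.filter (lam · ≠ 0)
  set L := s.sup fun p => p.1.length
  have hmaps : ∀ p ∈ s', blockOf n p.1.length ∈ Finset.Ico M (M + (L + 1)) := by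
    intro p hp
    obtain ⟨hps, hp0⟩ := Finset.mem_filter.1 hp
    have hL : p.1.length ≤ L := Finset.le_sup (f := fun p : Bidx => p.1.length) hps
    have hb : blockOf n p.1.length ≤ p.1.length := Nat.findGreatest_le _
    exact Finset.mem_Ico.2
      ⟨le_of_apply_le_of_lt_apply_succ hn (hs p hps hp0) (blockOf_spec hn hn0 _).2, by omega⟩
  have hfiber (j : ℕ) : ‖∑ p ∈ s' with blockOf n p.1.length = j, lam p • e p‖ ≤ w j := by
    have hsub : s'.filter (blockOf n ·.1.length = j) ⊆ blockIndices n j := fun p hp =>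
      (Finset.mem_filter.1 hp).2 ▸ mem_blockIndices_blockOf hn hn0 p
    refine (he j _ (fun p hp => mem_blockIndices.1 (hsub hp)) lam).trans
      ((Real.sqrt_le_sqrt ?_).trans (hlam j))
    exact Finset.sum_le_sum_of_subset_of_nonneg hsub fun _ _ _ => sq_nonneg _
  calc ‖∑ p ∈ s, lam p • e p‖
      = ‖∑ j ∈ Finset.Ico M (M + (L + 1)),
          ∑ p ∈ s' with blockOf n p.1.length = j, lam p • e p‖ := by
        rw [Finset.sum_fiberwise_of_maps_to hmaps,
          Finset.sum_filter_of_ne fun p _ h => left_ne_zero_of_smul h]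
    _ ≤ ∑ j ∈ Finset.Ico M (M + (L + 1)), w j :=
        (norm_sum_le _ _).trans (Finset.sum_le_sum fun j _ => hfiber j)
    _ ≤ 3 / 2 * w M := by
        rw [Finset.sum_Ico_eq_sum_range, Nat.add_sub_cancel_left]
        exact sum_range_add_le_of_le_div_three hw (fun j => (Real.sqrt_nonneg _).trans (hlam j)) _ _

lemma summable_smul [CompleteSpace X] (hn : StrictMono n) (hn0 : n 0 = 0)
    (he : BlockUpperBound n e) (hw : ∀ j, w (j + 1) ≤ w j / 3)
    (hlam : ∀ j, √(∑ p ∈ blockIndices n j, lam p ^ 2) ≤ w j) :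
    Summable fun p => lam p • e p := by
  have hw0 (j : ℕ) : 0 ≤ w j := (Real.sqrt_nonneg _).trans (hlam j)
  have hlim : Filter.Tendsto w Filter.atTop (nhds 0) :=
    (summable_of_sum_range_le hw0 fun d => by
      simpa using sum_range_add_le_of_le_div_three hw hw0 d 0).tendsto_atTop_zero
  refine summable_iff_vanishing_norm.2 fun ε hε => ?_
  obtain ⟨M, hM⟩ := ((hlim.const_mul (3 / 2)).eventually (gt_mem_nhds (by simpa using hε))).exists
  refine ⟨(Finset.range M).biUnion (blockIndices n), fun t ht => (norm_sum_smul_le hn hn0 he hw hlam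
    fun p hp _ => ?_).trans_lt hM⟩
  by_contra hlt
  have hb : blockOf n p.1.length < M :=
    hn.lt_iff_lt.1 ((blockOf_spec hn hn0 _).1.trans_lt (not_le.1 hlt))
  exact Finset.disjoint_left.1 ht hp
    (Finset.mem_biUnion.2 ⟨_, Finset.mem_range.2 hb, mem_blockIndices_blockOf hn hn0 p⟩)

lemma norm_tsum_smul_le [CompleteSpace X] (hn : StrictMono n) (hn0 : n 0 = 0)
    (he : BlockUpperBound n e) (hw : ∀ j, w (j + 1) ≤ w j / 3)
    (hlam : ∀ j, √(∑ p ∈ blockIndices n j, lam p ^ 2) ≤ w j) {M : ℕ}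
    (hM : ∀ p, lam p ≠ 0 → n M ≤ p.1.length) :
    ‖∑' p, lam p • e p‖ ≤ 3 / 2 * w M :=
  le_of_tendsto' (summable_smul hn hn0 he hw hlam).hasSum.norm fun _ =>
    norm_sum_smul_le hn hn0 he hw hlam fun p _ => hM p

lemma tendsto_sum_range_sum_blockIndices {Y : Type*} [AddCommMonoid Y] [TopologicalSpace Y]
    (hn : StrictMono n) (hn0 : n 0 = 0) {x : Bidx → Y} {S : Y} (hx : HasSum x S) :
    Filter.Tendsto (fun m => ∑ j ∈ Finset.range m, ∑ p ∈ blockIndices n j, x p) Filter.atTop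
      (nhds S) := by
  have hmono : Monotone fun m => (Finset.range m).biUnion (blockIndices n) := fun a b hab =>
    Finset.biUnion_subset_biUnion_of_subset_left _ (Finset.range_mono hab)
  have hcover (p : Bidx) : ∃ m, p ∈ (Finset.range m).biUnion (blockIndices n) :=
    ⟨_, Finset.mem_biUnion.2
      ⟨_, Finset.mem_range.2 (Nat.lt_succ_self _), mem_blockIndices_blockOf hn hn0 p⟩⟩
  refine (hx.comp (Filter.tendsto_atTop_finset_of_monotone hmono hcover)).congr fun m => ?_
  exact Finset.sum_biUnion fun i _ j _ hij => disjoint_blockIndices hn hij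

lemma inv_mul_norm_sum_blockIndices_le_norm_tsum (hn : StrictMono n) (hn0 : n 0 = 0) {K : ℝ}
    (hK : ∀ v : ℕ → X,
      (∀ j, v j ∈ Submodule.span ℝ (e '' {p : Bidx | n j ≤ p.1.length ∧ p.1.length < n (j+1)})) →
      ∀ S : X, Filter.Tendsto (fun m => ∑ j ∈ Finset.range m, v j) Filter.atTop (nhds S) →
        ∀ k l : ℕ, k ≤ l → K⁻¹ * ‖∑ j ∈ Finset.Icc k l, v j‖ ≤ ‖S‖)
    (hsum : Summable fun p => lam p • e p) (k : ℕ) :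
    K⁻¹ * ‖∑ p ∈ blockIndices n k, lam p • e p‖ ≤ ‖∑' p, lam p • e p‖ := by
  have hspan (j : ℕ) : ∑ p ∈ blockIndices n j, lam p • e p ∈
      Submodule.span ℝ (e '' {p : Bidx | n j ≤ p.1.length ∧ p.1.length < n (j+1)}) :=
    Submodule.sum_mem _ fun p hp => Submodule.smul_mem _ _
      (Submodule.subset_span (Set.mem_image_of_mem e (mem_blockIndices.1 hp)))
  simpa using hK _ hspan _ (tendsto_sum_range_sum_blockIndices hn hn0 hsum.hasSum) k k le_rfl

end BlockSeries

section IndicatorSeries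

variable {α ι : Type*} [MeasurableSpace α] {μ : Measure α} [IsFiniteMeasure μ]
  {A : ι → Set α} {d : ι → ℝ}

lemma tsum_lintegral_enorm_indicator_const_ne_top (hA : ∀ i, MeasurableSet (A i))
    (hd : Summable fun i => |d i| * μ.real (A i)) :
    ∑' i, ∫⁻ t, ‖(A i).indicator (fun _ => d i) t‖ₑ ∂μ ≠ ⊤ := by
  have h (i : ι) :
      ∫⁻ t, ‖(A i).indicator (fun _ => d i) t‖ₑ ∂μ = ENNReal.ofReal (|d i| * μ.real (A i)) := by
    simp_rw [enorm_indicator_eq_indicator_enorm]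
    rw [lintegral_indicator_const (hA i), Real.enorm_eq_ofReal_abs,
      ENNReal.ofReal_mul (abs_nonneg _), ofReal_measureReal]
  simp_rw [h, ← ENNReal.ofReal_tsum_of_nonneg (fun i => by positivity) hd]
  exact ENNReal.ofReal_ne_top

lemma integrable_tsum_indicator_const [Countable ι] (hA : ∀ i, MeasurableSet (A i))
    (hd : Summable fun i => |d i| * μ.real (A i)) :
    Integrable (fun t => ∑' i, (A i).indicator (fun _ => d i) t) μ := by
  refine ⟨(Measurable.tsum fun i => measurable_const.indicator (hA i)).aestronglyMeasurable, ?_⟩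
  rw [hasFiniteIntegral_iff_enorm]
  calc ∫⁻ t, ‖∑' i, (A i).indicator (fun _ => d i) t‖ₑ ∂μ
      ≤ ∫⁻ t, ∑' i, ‖(A i).indicator (fun _ => d i) t‖ₑ ∂μ :=
        lintegral_mono fun _ => enorm_tsum_le_tsum_enorm
    _ = ∑' i, ∫⁻ t, ‖(A i).indicator (fun _ => d i) t‖ₑ ∂μ :=
        lintegral_tsum fun i => (measurable_const.indicator (hA i)).enorm.aemeasurable
    _ < ⊤ := (tsum_lintegral_enorm_indicator_const_ne_top hA hd).lt_top

lemma integral_tsum_indicator_const [Countable ι] (hA : ∀ i, MeasurableSet (A i))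
    (hd : Summable fun i => |d i| * μ.real (A i)) :
    ∫ t, ∑' i, (A i).indicator (fun _ => d i) t ∂μ = ∑' i, μ.real (A i) * d i := by
  rw [integral_tsum (fun i => (stronglyMeasurable_const.indicator (hA i)).aestronglyMeasurable)
    (tsum_lintegral_enorm_indicator_const_ne_top hA hd)]
  simp_rw [integral_indicator_const _ (hA _), smul_eq_mul]

end IndicatorSeries

lemma measureReal_div_mem_Icc {α : Type*} [MeasurableSpace α] {μ ν : Measure α} (hμν : μ ≤ ν)
    {s : Set α} (hs : ν s ≠ ⊤) : μ.real s / ν.real s ∈ Set.Icc 0 1 :=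
  ⟨by positivity, div_le_one_of_le₀ (ENNReal.toReal_mono hs (hμν s)) measureReal_nonneg⟩

section BasicFunction

variable {X : Type} [NormedAddCommGroup X] [NormedSpace ℝ X] {A : Bidx → Set ℝ} {c : Bidx → ℝ}
  {e : Bidx → X}

lemma IsPettisIntegralOn.unique {f : ℝ → X} {μ : Measure ℝ} {E : Set ℝ} {v w : X}
    (hv : IsPettisIntegralOn f μ E v) (hw : IsPettisIntegralOn f μ E w) : v = w :=
  sub_eq_zero.1 (SeparatingDual.eq_zero_of_forall_dual_eq_zero (R := ℝ) fun φ => by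
    rw [map_sub, hv φ, hw φ, sub_self])

lemma comp_basicFun_apply (hdisj : ∀ p q : Bidx, p ≠ q → Disjoint (A p) (A q))
    (φ : X →L[ℝ] ℝ) (t : ℝ) :
    φ (basicFun c A e t) =
      ∑' p, (A p).indicator (fun _ => (volume.real (A p))⁻¹ * (c p * φ (e p))) t := by
  have hsupp : (Function.support fun p =>
      (A p).indicator (fun _ => (volume (A p)).toReal⁻¹ • (c p • e p)) t).Subsingleton :=
    fun p hp q hq => by_contra fun hpq => Set.disjoint_left.1 (hdisj p q hpq)
      (Set.mem_of_indicator_ne_zero hp) (Set.mem_of_indicator_ne_zero hq)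
  rw [basicFun, φ.map_tsum (summable_of_hasFiniteSupport hsupp.finite)]
  refine tsum_congr fun p => ?_
  by_cases ht : t ∈ A p <;> simp [ht, measureReal_def]

variable (μ : Measure ℝ)

lemma summable_abs_inv_mul_mul_measureReal (hμ : μ ≤ volume) (hAfin : ∀ p, volume (A p) ≠ ⊤)
    {r : Bidx → ℝ} (hr : Summable r) :
    Summable fun p => |(volume.real (A p))⁻¹ * r p| * μ.real (A p) := by
  refine hr.abs.of_nonneg_of_le (fun p => by positivity) fun p => ?_
  rw [abs_mul, abs_inv, abs_of_nonneg measureReal_nonneg, mul_right_comm, ← div_eq_inv_mul]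
  exact mul_le_of_le_one_left (abs_nonneg _) (measureReal_div_mem_Icc hμ (hAfin p)).2

lemma integrable_comp_basicFun [IsFiniteMeasure μ] (hμ : μ ≤ volume)
    (hAm : ∀ p, MeasurableSet (A p)) (hAfin : ∀ p, volume (A p) ≠ ⊤)
    (hdisj : ∀ p q : Bidx, p ≠ q → Disjoint (A p) (A q))
    (φ : X →L[ℝ] ℝ) (hc : Summable fun p => c p * φ (e p)) :
    Integrable (fun t => φ (basicFun c A e t)) μ := by
  simp_rw [comp_basicFun_apply hdisj]
  exact integrable_tsum_indicator_const hAm (summable_abs_inv_mul_mul_measureReal μ hμ hAfin hc)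

lemma integral_comp_basicFun [IsFiniteMeasure μ] (hμ : μ ≤ volume) (hAm : ∀ p, MeasurableSet (A p))
    (hAfin : ∀ p, volume (A p) ≠ ⊤) (hdisj : ∀ p q : Bidx, p ≠ q → Disjoint (A p) (A q))
    (φ : X →L[ℝ] ℝ) (hc : Summable fun p => c p * φ (e p)) :
    ∫ t, φ (basicFun c A e t) ∂μ = ∑' p, μ.real (A p) / volume.real (A p) * (c p * φ (e p)) := by
  simp_rw [comp_basicFun_apply hdisj]
  rw [integral_tsum_indicator_const hAm (summable_abs_inv_mul_mul_measureReal μ hμ hAfin hc)]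
  simp_rw [div_eq_mul_inv, mul_assoc]

lemma isPettisIntegralOn_basicFun [IsFiniteMeasure μ] (hμ : μ ≤ volume)
    (hAm : ∀ p, MeasurableSet (A p)) (hAfin : ∀ p, volume (A p) ≠ ⊤)
    (hdisj : ∀ p q : Bidx, p ≠ q → Disjoint (A p) (A q))
    (E : Set ℝ) (hsum : Summable fun p => c p • e p)
    (hθ : Summable fun p => ((μ.restrict E).real (A p) / volume.real (A p) * c p) • e p) :
    IsPettisIntegralOn (basicFun c A e) μ E
      (∑' p, ((μ.restrict E).real (A p) / volume.real (A p) * c p) • e p) := by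
  intro φ
  rw [integral_comp_basicFun _ (Measure.restrict_le_self.trans hμ) hAm hAfin hdisj φ
    (by simpa using φ.summable hsum), φ.map_tsum hθ]
  simp_rw [map_smul, smul_eq_mul, mul_assoc]

lemma pettisIntegrable_basicFun [IsFiniteMeasure μ] (hμ : μ ≤ volume)
    (hAm : ∀ p, MeasurableSet (A p)) (hAfin : ∀ p, volume (A p) ≠ ⊤)
    (hdisj : ∀ p q : Bidx, p ≠ q → Disjoint (A p) (A q))
    (hsum : ∀ θ : Bidx → ℝ, (∀ p, θ p ∈ Set.Icc 0 1) → Summable fun p => (θ p * c p) • e p) :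
    PettisIntegrable (basicFun c A e) μ := by
  have hc : Summable fun p => c p • e p := by
    simpa using hsum 1 fun _ => ⟨zero_le_one, le_rfl⟩
  refine ⟨fun φ => integrable_comp_basicFun μ hμ hAm hAfin hdisj φ (by simpa using φ.summable hc),
    fun E _ => ⟨_, isPettisIntegralOn_basicFun μ hμ hAm hAfin hdisj E hc
      (hsum _ fun p => measureReal_div_mem_Icc (Measure.restrict_le_self.trans hμ) (hAfin p))⟩⟩

lemma isPettisIntegralOn_basicFun_of_subset {F E : Set ℝ} [IsFiniteMeasure (volume.restrict F)]
    (hAm : ∀ p, MeasurableSet (A p))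
    (hAfin : ∀ p, volume (A p) ≠ ⊤) (hA0 : ∀ p, volume (A p) ≠ 0)
    (hdisj : ∀ p q : Bidx, p ≠ q → Disjoint (A p) (A q)) (hsupp : ∀ p, c p ≠ 0 → A p ⊆ E ∩ F)
    (hsum : Summable fun p => c p • e p) :
    IsPettisIntegralOn (basicFun c A e) (volume.restrict F) E (∑' p, c p • e p) := by
  have hθ (p : Bidx) :
      ((volume.restrict F).restrict E).real (A p) / volume.real (A p) * c p = c p := by
    by_cases hp : c p = 0
    · rw [hp, mul_zero]
    obtain ⟨hE, hF⟩ := Set.subset_inter_iff.1 (hsupp p hp)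
    rw [measureReal_def, Measure.restrict_eq_self _ hE, Measure.restrict_eq_self _ hF,
      measureReal_def, div_self (ENNReal.toReal_ne_zero.2 ⟨hA0 p, hAfin p⟩), one_mul]
  simpa only [hθ] using isPettisIntegralOn_basicFun (volume.restrict F) Measure.restrict_le_self
    hAm hAfin hdisj E hsum (by simpa only [hθ] using hsum)

end BasicFunction

section Tree

variable {X : Type*} [NormedAddCommGroup X] [NormedSpace ℝ X] {n nn : ℕ → ℕ} {e : Bidx → X}
  {τ : List Bool}

lemma sqrt_sum_blockIndices_sq_le (hnn : ∀ i, nn i ≤ i) {lam : Bidx → ℝ}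
    (hlam : ∀ p, |lam p| ≤ |resCoef τ (specialCoef nn) p|) (j : ℕ) :
    √(∑ p ∈ blockIndices n j, lam p ^ 2) ≤ 2 ^ (-(τ.length : ℝ) / 2) * harmonicBlockNorm n j := by
  refine (Real.sqrt_le_sqrt ?_).trans_eq
    (Real.sqrt_sq (mul_nonneg (by positivity) (harmonicBlockNorm_nonneg n j)))
  exact (Finset.sum_le_sum fun p _ => sq_le_sq.2 (hlam p)).trans
    (sum_blockIndices_sq_resCoef_specialCoef_le hnn τ n j)

lemma rpow_mul_harmonicBlockNorm_succ_le
    (hu : ∀ j, harmonicBlockNorm n (j + 1) ≤ harmonicBlockNorm n j / 3) (L : ℕ) (j : ℕ) :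
    (2:ℝ) ^ (-(L : ℝ) / 2) * harmonicBlockNorm n (j + 1) ≤
      (2:ℝ) ^ (-(L : ℝ) / 2) * harmonicBlockNorm n j / 3 := by
  rw [mul_div_assoc]
  exact mul_le_mul_of_nonneg_left (hu j) (by positivity)

lemma summable_smul_of_abs_le_resCoef [CompleteSpace X] (hn : StrictMono n) (hn0 : n 0 = 0)
    (he : BlockUpperBound n e) (hu : ∀ j, harmonicBlockNorm n (j + 1) ≤ harmonicBlockNorm n j / 3)
    (hnn : ∀ i, nn i ≤ i) {lam : Bidx → ℝ}
    (hlam : ∀ p, |lam p| ≤ |resCoef τ (specialCoef nn) p|) : Summable fun p => lam p • e p :=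
  summable_smul hn hn0 he (rpow_mul_harmonicBlockNorm_succ_le hu _)
    (sqrt_sum_blockIndices_sq_le hnn hlam)

lemma norm_tsum_resCoef_smul_le [CompleteSpace X] (hn : StrictMono n) (hn0 : n 0 = 0)
    (he : BlockUpperBound n e) (hu : ∀ j, harmonicBlockNorm n (j + 1) ≤ harmonicBlockNorm n j / 3)
    (hnn : ∀ i, nn i ≤ i) {k : ℕ} (hτ : τ.length = n k) :
    ‖∑' p, resCoef τ (specialCoef nn) p • e p‖ ≤
      3 / 2 * 2 ^ (-(n k : ℝ) / 2) * harmonicBlockNorm n k := by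
  rw [← hτ, mul_assoc]
  exact norm_tsum_smul_le hn hn0 he (rpow_mul_harmonicBlockNorm_succ_le hu _)
    (sqrt_sum_blockIndices_sq_le hnn fun _ => le_rfl)
    fun _ hp => hτ ▸ (prefix_of_resCoef_ne_zero hp).length_le

lemma norm_tsum_resCoef_smul_ge (hn : StrictMono n) (hn0 : n 0 = 0) (hnn : ∀ i, nn i ≤ i)
    {k : ℕ} (hτ : τ.length = n k)
    (hlow : ∀ s : Finset Bidx, (∀ p ∈ s, n k ≤ p.1.length ∧ p.1.length < n (k + 1)) →
      ∀ lam : Bidx → ℝ, 1 / 2 * √(∑ p ∈ s, lam p ^ 2) ≤ ‖∑ p ∈ s, lam p • e p‖)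
    {K : ℝ} (hK : 0 ≤ K)
    (hbasis : ∀ v : ℕ → X,
      (∀ j, v j ∈ Submodule.span ℝ (e '' {p : Bidx | n j ≤ p.1.length ∧ p.1.length < n (j+1)})) →
      ∀ S : X, Filter.Tendsto (fun m => ∑ j ∈ Finset.range m, v j) Filter.atTop (nhds S) →
        ∀ k l : ℕ, k ≤ l → K⁻¹ * ‖∑ j ∈ Finset.Icc k l, v j‖ ≤ ‖S‖)
    (hsum : Summable fun p => resCoef τ (specialCoef nn) p • e p) :
    (2 * K)⁻¹ * 2 ^ (-(n k : ℝ) / 2) * harmonicBlockNorm n k ≤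
      ‖∑' p, resCoef τ (specialCoef nn) p • e p‖ := by
  have hblock := hlow _ (fun p => mem_blockIndices.1) (resCoef τ (specialCoef nn))
  rw [sum_blockIndices_sq_resCoef_specialCoef hnn hτ.le,
    Real.sqrt_sq (mul_nonneg (by positivity) (harmonicBlockNorm_nonneg n k)), hτ] at hblock
  calc (2 * K)⁻¹ * 2 ^ (-(n k : ℝ) / 2) * harmonicBlockNorm n k
      = K⁻¹ * (1 / 2 * (2 ^ (-(n k : ℝ) / 2) * harmonicBlockNorm n k)) := by ring
    _ ≤ K⁻¹ * ‖∑ p ∈ blockIndices n k, resCoef τ (specialCoef nn) p • e p‖ :=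
      mul_le_mul_of_nonneg_left hblock (inv_nonneg.2 hK)
    _ ≤ _ := inv_mul_norm_sum_blockIndices_le_norm_tsum hn hn0 hbasis hsum k

end Tree

/-- Lemma 4.4: for `𝐧 ∈ D`, the `X`-valued special basic function `f(𝐧)` is Pettis
integrable, and for `τ ∈ {0,1}^{n_k}`:
`(1/2K) 2^{-n_k/2} u_k ≤ ‖∫_{I_τ} f(𝐧)_{|τ}‖ ≤ (3/2) 2^{-n_k/2} u_k`,
where `u_k = √(∑_{i=n_k}^{n_{k+1}-1} 1/(i+1)²)`. -/
theorem stmt16 {X : Type} [NormedAddCommGroup X] [NormedSpace ℝ X] [CompleteSpace X]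
    (A : Bidx → Set ℝ) (hAc : ∀ p, IsClosed (A p))
    (hAs : ∀ p : Bidx, A p ⊆ dyadicInterval p.1)
    (hApos : ∀ p, 0 < volume (A p))
    (hdisj : ∀ p q : Bidx, p ≠ q → Disjoint (A p) (A q))
    (n : ℕ → ℕ) (hmono : StrictMono n) (hn0 : n 0 = 0)
    (K : ℝ) (hK : 1 < K) (e : Bidx → X)
    (hblock : ∀ (j : ℕ) (s : Finset Bidx),
      (∀ p ∈ s, n j ≤ p.1.length ∧ p.1.length < n (j+1)) →
      ∀ lam : Bidx → ℝ,
        ‖∑ p ∈ s, lam p • e p‖ ≤ Real.sqrt (∑ p ∈ s, lam p ^ 2) ∧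
        (1/2) * Real.sqrt (∑ p ∈ s, lam p ^ 2) ≤ ‖∑ p ∈ s, lam p • e p‖)
    (hbb : ∀ v : ℕ → X,
      (∀ j, v j ∈ Submodule.span ℝ
        (e '' {p : Bidx | n j ≤ p.1.length ∧ p.1.length < n (j+1)})) →
      ∀ S : X,
        Filter.Tendsto (fun m => ∑ j ∈ Finset.range m, v j) Filter.atTop (nhds S) →
        (∀ k l : ℕ, k ≤ l → K⁻¹ * ‖∑ j ∈ Finset.Icc k l, v j‖ ≤ ‖S‖) ∧
        (∀ k : ℕ, K⁻¹ * ‖S - ∑ j ∈ Finset.range k, v j‖ ≤ ‖S‖))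
    (hu : ∀ k : ℕ,
      Real.sqrt (∑ i ∈ Finset.Ico (n (k+1)) (n (k+2)), (((i:ℝ) + 1)⁻¹) ^ 2) <
      Real.sqrt (∑ i ∈ Finset.Ico (n k) (n (k+1)), (((i:ℝ) + 1)⁻¹) ^ 2) / 3)
    (nn : ℕ → ℕ) (hnn : ∀ i, nn i ≤ i) :
    PettisIntegrable (basicFun (specialCoef nn) A e) (volume.restrict (Set.Icc 0 1)) ∧
    ∀ (k : ℕ) (τ : List Bool), τ.length = n k → ∀ v : X,
      IsPettisIntegralOn (basicFunRes τ (specialCoef nn) A e)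
        (volume.restrict (Set.Icc 0 1)) (dyadicInterval τ) v →
      (2*K)⁻¹ * (2:ℝ) ^ (-((n k : ℝ))/2) *
          Real.sqrt (∑ i ∈ Finset.Ico (n k) (n (k+1)), (((i:ℝ) + 1)⁻¹) ^ 2) ≤ ‖v‖ ∧
      ‖v‖ ≤ (3/2) * (2:ℝ) ^ (-((n k : ℝ))/2) *
          Real.sqrt (∑ i ∈ Finset.Ico (n k) (n (k+1)), (((i:ℝ) + 1)⁻¹) ^ 2) := by
  have he : BlockUpperBound n e := fun j s hs lam => (hblock j s hs lam).1
  have hu' : ∀ j, harmonicBlockNorm n (j + 1) ≤ harmonicBlockNorm n j / 3 := fun j => (hu j).le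
  have hAm : ∀ p, MeasurableSet (A p) := fun p => (hAc p).measurableSet
  have hAI : ∀ p, A p ⊆ Set.Icc 0 1 := fun p => (hAs p).trans (dyadicInterval_subset_Icc _)
  have hAfin : ∀ p, volume (A p) ≠ ⊤ := fun p =>
    measure_ne_top_of_subset (hAI p) measure_Icc_lt_top.ne
  refine ⟨pettisIntegrable_basicFun _ Measure.restrict_le_self hAm hAfin hdisj fun θ hθ =>
    summable_smul_of_abs_le_resCoef hmono hn0 he hu' hnn (τ := []) fun p => ?_, ?_⟩
  · rw [resCoef_nil, abs_mul]
    exact mul_le_of_le_one_left (abs_nonneg _) (abs_le.2 ⟨by linarith [(hθ p).1], (hθ p).2⟩)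
  intro k τ hτ v hv
  have hsum :=
    summable_smul_of_abs_le_resCoef hmono hn0 he hu' hnn (e := e) (τ := τ) fun _ => le_rfl
  obtain rfl : v = ∑' p, resCoef τ (specialCoef nn) p • e p := hv.unique <|
    isPettisIntegralOn_basicFun_of_subset hAm hAfin (fun p => (hApos p).ne') hdisj
      (fun p hp => Set.subset_inter
        ((hAs p).trans (dyadicInterval_anti (prefix_of_resCoef_ne_zero hp))) (hAI p)) hsum
  exact ⟨norm_tsum_resCoef_smul_ge hmono hn0 hnn hτ (fun s hs lam => (hblock k s hs lam).2)
      (by linarith) (fun w hw S hS => (hbb w hw S hS).1) hsum,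
    norm_tsum_resCoef_smul_le hmono hn0 he hu' hnn hτ⟩
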